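/- arXiv:2002.04457 — 5 statements merged into one kernel-verified Lean document; each statement's English description precedes it below -/
import Mathlib

section
/- Let Z be an n×K real matrix all of whose entries lie in {0,1}, and suppose Z = U D Rᵀ, where U is n×r, R is K×r with orthonormal columns (RᵀR = I_r), and D is an r×r diagonal matrix with positive diagonal entries whose maximum is σ₁(D). If i₁ ≠ i₂ are row indices such that the i₁-th and i₂-th rows of Z are not equal, then the Euclidean distance between the corresponding rows of U satisfies ‖U(i₁,:) − U(i₂,:)‖_{ℓ₂} ≥ 1/σ₁(D). -/
/-- **Row separation of the singular vectors** (Lemma 2 of the paper).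
If `Z = U D Rᵀ` with `R` having orthonormal columns and `D` diagonal with positive
entries having maximum `σ₁`, and rows `i₁ ≠ i₂` of the 0/1-matrix `Z` differ, then
`‖U(i₁,:) − U(i₂,:)‖ ≥ 1/σ₁`. -/
theorem rows_of_U_are_separated
    (n K r : ℕ)
    (Z : Matrix (Fin n) (Fin K) ℝ)
    (hZ01 : ∀ i k, Z i k = 0 ∨ Z i k = 1)
    (U : Matrix (Fin n) (Fin r) ℝ)
    (R : Matrix (Fin K) (Fin r) ℝ)
    (hR : R.transpose * R = 1)
    (d : Fin r → ℝ) (hd : ∀ a, 0 < d a)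
    (σ₁ : ℝ) (hσ₁ : IsGreatest (Set.range d) σ₁)
    (hZ : Z = U * Matrix.diagonal d * R.transpose)
    (i₁ i₂ : Fin n) (hne : i₁ ≠ i₂) (hrow : Z i₁ ≠ Z i₂) :
    1 / σ₁ ≤ Real.sqrt (∑ a, (U i₁ a - U i₂ a) ^ 2) := by
  obtain ⟨a₀, ha₀⟩ := hσ₁.1
  have hσpos : 0 < σ₁ := ha₀ ▸ hd a₀
  set v : Fin r → ℝ := fun a => U i₁ a - U i₂ a with hv
  -- entries of Z
  have hZentry : ∀ i k, Z i k = ∑ a, U i a * d a * R k a := by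
    intro i k
    simp only [hZ, Matrix.mul_apply, Matrix.transpose_apply]
    refine Finset.sum_congr rfl fun x _ => ?_
    congr 1
    rw [Finset.sum_eq_single x]
    · simp [Matrix.diagonal_apply]
    · intro b _ hb; simp [Matrix.diagonal_apply, hb]
    · simp
  -- orthonormality
  have horth : ∀ a b : Fin r, ∑ k, R k a * R k b = if a = b then 1 else 0 := by
    intro a b
    have := congrFun (congrFun hR a) b
    simpa [Matrix.mul_apply, Matrix.transpose_apply, Matrix.one_apply] using this
  -- key identity
  have hsum : ∑ k, (Z i₁ k - Z i₂ k) ^ 2 = ∑ a, (v a * d a) ^ 2 := by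
    have hdiff : ∀ k, Z i₁ k - Z i₂ k = ∑ a, v a * d a * R k a := by
      intro k
      rw [hZentry i₁ k, hZentry i₂ k, ← Finset.sum_sub_distrib]
      exact Finset.sum_congr rfl fun a _ => by simp [hv]; ring
    calc ∑ k, (Z i₁ k - Z i₂ k) ^ 2
        = ∑ k, ∑ a, ∑ b, (v a * d a * R k a) * (v b * d b * R k b) := by
          refine Finset.sum_congr rfl fun k _ => ?_
          rw [hdiff k, sq, Finset.sum_mul_sum]
      _ = ∑ a, ∑ b, (v a * d a) * (v b * d b) * ∑ k, R k a * R k b := by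
          rw [Finset.sum_comm]
          refine Finset.sum_congr rfl fun a _ => ?_
          rw [Finset.sum_comm]
          refine Finset.sum_congr rfl fun b _ => ?_
          rw [Finset.mul_sum]
          exact Finset.sum_congr rfl fun k _ => by ring
      _ = ∑ a, (v a * d a) ^ 2 := by
          refine Finset.sum_congr rfl fun a _ => ?_
          rw [Finset.sum_eq_single a]
          · simp [horth, sq]
          · intro b _ hb
            simp [horth, (Ne.symm hb)]
          · simp
  -- lower bound 1
  have hone : (1 : ℝ) ≤ ∑ k, (Z i₁ k - Z i₂ k) ^ 2 := by
    have : ∃ k, Z i₁ k ≠ Z i₂ k := by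
      by_contra h
      push_neg at h
      exact hrow (funext h)
    obtain ⟨k, hk⟩ := this
    have h1 : (Z i₁ k - Z i₂ k) ^ 2 = 1 := by
      rcases hZ01 i₁ k with h₁ | h₁ <;> rcases hZ01 i₂ k with h₂ | h₂ <;>
        simp [h₁, h₂] at hk ⊢
    calc (1 : ℝ) = (Z i₁ k - Z i₂ k) ^ 2 := h1.symm
      _ ≤ ∑ k, (Z i₁ k - Z i₂ k) ^ 2 :=
        Finset.single_le_sum (f := fun j => (Z i₁ j - Z i₂ j) ^ 2)
          (fun j _ => sq_nonneg _) (Finset.mem_univ k)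
  -- upper bound by σ₁²
  have hub : ∑ a, (v a * d a) ^ 2 ≤ σ₁ ^ 2 * ∑ a, v a ^ 2 := by
    rw [Finset.mul_sum]
    refine Finset.sum_le_sum fun a _ => ?_
    have hda : d a ≤ σ₁ := hσ₁.2 ⟨a, rfl⟩
    have hsq : d a ^ 2 ≤ σ₁ ^ 2 := by nlinarith [(hd a).le]
    nlinarith [mul_le_mul_of_nonneg_left hsq (sq_nonneg (v a))]
  have hS : (1 : ℝ) ≤ σ₁ ^ 2 * ∑ a, v a ^ 2 := le_trans (hsum ▸ hone) hub
  rw [show (∑ a, (U i₁ a - U i₂ a) ^ 2) = ∑ a, v a ^ 2 from rfl]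
  have hnn : (0:ℝ) ≤ ∑ a, v a ^ 2 := Finset.sum_nonneg fun a _ => sq_nonneg (v a)
  rw [Real.le_sqrt (by positivity)]
  · rw [div_pow, div_le_iff₀ (by positivity)]
    nlinarith
  · exact hnn
end

section
/- Let Z be an n×K real matrix all of whose entries lie in {0,1} and such that every row of Z contains exactly m ones. Suppose Z = U D Rᵀ where U is n×r with orthonormal columns (UᵀU = I_r), R is K×r with orthonormal columns (RᵀR = I_r), and D is an r×r diagonal matrix with diagonal entries d₁ ≥ … ≥ d_r > 0 satisfying d₁ ≤ κ₀ d_r for some κ₀ ≥ 1. Then for every row index j ∈ {1,…,n}, ‖e_jᵀ U‖_{ℓ₂} ≤ √m / d_r ≤ κ₀ √(r/n). (Incoherence of the singular vectors Ū of the global membership matrix.) -/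
/-!
Since `RᵀR = I`, the Gram matrix `Z Zᵀ` equals `U D² Uᵀ`. A row of `Z` with `m` entries equal
to `1` and the rest `0` has squared norm `m`, so `∑ₐ dₐ² U_{ja}² = m` for every `j`, which gives
`d_r² ‖e_jᵀU‖² ≤ m`. Taking the trace and using `UᵀU = I` gives `∑ₐ dₐ² = n m`, and bounding
every `dₐ` by `d₁ ≤ κ₀ d_r` gives `n m ≤ r κ₀² d_r²`.
-/

namespace Matrix

variable {ι κ ρ α : Type*} [Fintype κ] [Fintype ρ] [DecidableEq ρ]

theorem mul_transpose_apply_self_of_zero_one [Semiring α] (Z : Matrix ι κ α) (i : ι)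
    (hZ : ∀ k, Z i k = 0 ∨ Z i k = 1) : (Z * Zᵀ) i i = ∑ k, Z i k := by
  simp only [mul_apply, transpose_apply]
  refine Finset.sum_congr rfl fun k _ => ?_
  rcases hZ k with h | h <;> simp [h]

variable [CommSemiring α]

theorem mul_diagonal_mul_transpose_mul_transpose (U : Matrix ι ρ α) (R : Matrix κ ρ α)
    (hR : Rᵀ * R = 1) (d : ρ → α) :
    U * diagonal d * Rᵀ * (U * diagonal d * Rᵀ)ᵀ = U * diagonal (d * d) * Uᵀ := by
  rw [transpose_mul, transpose_mul, transpose_transpose, diagonal_transpose,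
    show diagonal (d * d) = diagonal d * diagonal d from (diagonal_mul_diagonal d d).symm]
  simp only [Matrix.mul_assoc]
  rw [← Matrix.mul_assoc Rᵀ R, hR, Matrix.one_mul]

theorem mul_diagonal_mul_transpose_apply_self (U : Matrix ι ρ α) (w : ρ → α) (j : ι) :
    (U * diagonal w * Uᵀ) j j = ∑ a, w a * U j a ^ 2 := by
  rw [mul_apply]
  simp only [mul_diagonal, transpose_apply]
  exact Finset.sum_congr rfl fun a _ => by ring

theorem trace_mul_diagonal_mul_transpose [Fintype ι] (U : Matrix ι ρ α) (hU : Uᵀ * U = 1)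
    (w : ρ → α) :
    trace (U * diagonal w * Uᵀ) = ∑ a, w a := by
  rw [trace_mul_comm, ← Matrix.mul_assoc, hU, Matrix.one_mul, trace_diagonal]

end Matrix

section WeightedSums

variable {ρ : Type*} [Fintype ρ]

theorem sqrt_sum_sq_le_of_weighted_sum_eq (x d : ρ → ℝ) {δ c : ℝ} (hδ : 0 < δ)
    (hd : ∀ a, δ ≤ d a) (h : ∑ a, d a * d a * x a ^ 2 = c) :
    √(∑ a, x a ^ 2) ≤ √c / δ := by
  have hsum : δ ^ 2 * ∑ a, x a ^ 2 ≤ c := by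
    rw [← h, Finset.mul_sum]
    refine Finset.sum_le_sum fun a _ => mul_le_mul_of_nonneg_right ?_ (sq_nonneg _)
    nlinarith [hd a]
  rw [← Real.sqrt_sq hδ.le, ← Real.sqrt_div' _ (sq_nonneg δ)]
  exact Real.sqrt_le_sqrt ((le_div_iff₀' (by positivity)).2 hsum)

theorem sqrt_div_le_of_sum_mul_self_eq (d : ρ → ℝ) {δ κ c N : ℝ} (hδ : 0 < δ) (hκ : 0 ≤ κ)
    (hN : 0 < N) (hd_nonneg : ∀ a, 0 ≤ d a) (hd_le : ∀ a, d a ≤ κ * δ)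
    (h : ∑ a, d a * d a = N * c) :
    √c / δ ≤ κ * √(Fintype.card ρ / N) := by
  have hNc : N * c ≤ κ ^ 2 * δ ^ 2 * Fintype.card ρ := by
    calc N * c = ∑ a, d a * d a := h.symm
      _ ≤ ∑ _a : ρ, (κ * δ) * (κ * δ) :=
        Finset.sum_le_sum fun a _ => mul_self_le_mul_self (hd_nonneg a) (hd_le a)
      _ = κ ^ 2 * δ ^ 2 * Fintype.card ρ := by
        rw [Finset.sum_const, Finset.card_univ, nsmul_eq_mul]; ring
  have hcδ : c / δ ^ 2 ≤ κ ^ 2 * (Fintype.card ρ / N) := by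
    rw [div_le_iff₀ (by positivity), mul_div_assoc', div_mul_eq_mul_div, le_div_iff₀ hN]
    linarith
  rw [← Real.sqrt_sq hδ.le, ← Real.sqrt_div' _ (sq_nonneg δ), ← Real.sqrt_sq hκ,
    ← Real.sqrt_mul (sq_nonneg κ)]
  exact Real.sqrt_le_sqrt hcδ

end WeightedSums

/-- **Incoherence of the singular vectors `Ū` of the global membership matrix**
(Lemma 4 of the paper): every row of `U` satisfies `‖e_jᵀU‖ ≤ √m / d_r ≤ κ₀ √(r/n)`. -/
theorem incoherence_of_U
    (n K r m : ℕ)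
    (Z : Matrix (Fin n) (Fin K) ℝ)
    (hZ01 : ∀ i k, Z i k = 0 ∨ Z i k = 1)
    (hZrow : ∀ i, ∑ k, Z i k = (m : ℝ))
    (U : Matrix (Fin n) (Fin r) ℝ) (hU : U.transpose * U = 1)
    (R : Matrix (Fin K) (Fin r) ℝ) (hR : R.transpose * R = 1)
    (d : Fin r → ℝ)
    (dmin dmax : ℝ)
    (hdmin : IsLeast (Set.range d) dmin)
    (hdmax : IsGreatest (Set.range d) dmax)
    (hdpos : 0 < dmin)
    (κ₀ : ℝ) (hκ : 1 ≤ κ₀) (hcond : dmax ≤ κ₀ * dmin)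
    (hZ : Z = U * Matrix.diagonal d * R.transpose) :
    (∀ j : Fin n, Real.sqrt (∑ a, (U j a) ^ 2) ≤ Real.sqrt m / dmin) ∧
      Real.sqrt m / dmin ≤ κ₀ * Real.sqrt ((r : ℝ) / n) := by
  have hdmin_le (a : Fin r) : dmin ≤ d a := hdmin.2 ⟨a, rfl⟩
  have hgram : Z * Z.transpose = U * Matrix.diagonal (d * d) * U.transpose :=
    hZ ▸ Matrix.mul_diagonal_mul_transpose_mul_transpose U R hR d
  have hgram_diag (j : Fin n) : (Z * Z.transpose) j j = m :=
    (Z.mul_transpose_apply_self_of_zero_one j (hZ01 j)).trans (hZrow j)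
  have hrow (j : Fin n) : ∑ a, d a * d a * U j a ^ 2 = m := by
    rw [← hgram_diag j, hgram, Matrix.mul_diagonal_mul_transpose_apply_self]
    rfl
  have htrace : ∑ a, d a * d a = n * m :=
    calc ∑ a, d a * d a = (Z * Z.transpose).trace := by
          rw [hgram, Matrix.trace_mul_diagonal_mul_transpose U hU]; rfl
      _ = n * m := by simp [Matrix.trace, hgram_diag]
  obtain ⟨a₀, -⟩ := hdmin.1
  have hn : 0 < n := Nat.pos_of_ne_zero <| by
    rintro rfl
    simpa [Matrix.mul_apply] using congrFun (congrFun hU a₀) a₀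
  refine ⟨fun j => sqrt_sum_sq_le_of_weighted_sum_eq _ d hdpos hdmin_le (hrow j), ?_⟩
  simpa only [Fintype.card_fin] using
    sqrt_div_le_of_sum_mul_self_eq d hdpos (by linarith) (by exact_mod_cast hn)
    (fun a => hdpos.le.trans (hdmin_le a)) (fun a => (hdmax.2 ⟨a, rfl⟩).trans hcond) htrace
end

section
/- Let A be a random adjacency tensor: on a probability space, the entries {A(i₁,i₂,i₃) : 1 ≤ i₁ ≤ i₂ ≤ n, 1 ≤ i₃ ≤ L} are independent Bernoulli random variables, A(i₂,i₁,i₃) = A(i₁,i₂,i₃) for all indices, and p_max = max_{i₁,i₂,i₃} E A(i₁,i₂,i₃) > 0. Let δ ∈ (0,1] and let u₁ ∈ ℝⁿ, u₂ ∈ ℝⁿ, u₃ ∈ ℝ^L be deterministic vectors with ‖u₁‖_{ℓ₂} ≤ 1, ‖u₂‖_{ℓ₂} ≤ 1, ‖u₃‖_{ℓ₂} ≤ 1 and ‖u₁‖_{ℓ∞} ≤ δ. Then for every t > 0, P( Σ_{i₁,i₂,i₃} (A(i₁,i₂,i₃) − E A(i₁,i₂,i₃)) u₁(i₁) u₂(i₂)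 u₃(i₃) ≥ t ) ≤ exp(−t²/(8 p_max)) + exp(−3t/(8δ)). -/
open MeasureTheory ProbabilityTheory Finset Real

/-!
Write `x = u₁ ⊗ u₂ ⊗ u₃`. By the symmetry `A(i₂,i₁,i₃) = A(i₁,i₂,i₃)` the projection is a sum,
over the independent entries with `i₁ ≤ i₂`, of centred Bernoulli variables with weights
`c(i₁,i₂,i₃) = x(i₁,i₂,i₃) + x(i₂,i₁,i₃)` (just `x` on the diagonal). These satisfy `|c| ≤ 2δ` and
`∑ c² ≤ 2 ∑ x² ≤ 2`, so Bernstein's inequality with variance proxy `2 p_max` and range `2δ` bounds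
the tail by `exp(-t² / (2 (2 p_max + 2δt/3)))`, which is at most the larger of the two exponentials.
Bernstein's inequality follows by the Chernoff method from `E exp(a (B - p)) ≤ exp(p (eᵃ - 1 - a))`
and `eᵃ - 1 - a ≤ a² / (2 (1 - r))` for `a ≤ 3r`, `0 ≤ r < 1`.
-/

namespace Real

theorem exp_le_one_add_add_sq_div_two_of_nonpos {a : ℝ} (ha : a ≤ 0) :
    exp a ≤ 1 + a + a ^ 2 / 2 := by
  -- `exp (-a) ≥ 1 - a + a²/2`, and `(1 - a + a²/2) (1 + a + a²/2) = 1 + a⁴/4 ≥ 1`.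
  have h := quadratic_le_exp_of_nonneg (neg_nonneg.2 ha)
  have hinv : exp a * exp (-a) = 1 := by rw [← exp_add, add_neg_cancel, exp_zero]
  nlinarith [exp_pos a, sq_nonneg (a ^ 2)]

theorem exp_sub_one_sub_le_of_nonneg_of_lt_three {a : ℝ} (h0 : 0 ≤ a) (h3 : a < 3) :
    exp a - 1 - a ≤ a ^ 2 / (2 * (1 - a / 3)) := by
  have hs : Summable (fun n : ℕ => a ^ n / n.factorial) := summable_pow_div_factorial a
  have hq0 : 0 ≤ a / 3 := by positivity
  have hq1 : a / 3 < 1 := by linarith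
  have htail : exp a - 1 - a = ∑' n : ℕ, a ^ (n + 2) / (n + 2).factorial := by
    rw [exp_eq_exp_ℝ, NormedSpace.exp_eq_tsum_div]
    beta_reduce
    rw [← hs.sum_add_tsum_nat_add 2]
    simp only [sum_range_succ, range_one, sum_singleton, pow_zero, pow_one, Nat.factorial_zero,
      Nat.factorial_one, Nat.cast_one, div_one]
    ring
  -- `2 * 3 ^ n ≤ (n + 2)!` dominates the tail by a geometric series of ratio `a / 3`.
  have hterm (n : ℕ) : a ^ (n + 2) / (n + 2).factorial ≤ a ^ 2 / 2 * (a / 3) ^ n := by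
    have hfact : (2 * 3 ^ n : ℝ) ≤ (n + 2).factorial := by
      have := Nat.factorial_mul_pow_le_factorial (m := 2) (n := n)
      rw [add_comm 2 n] at this
      exact_mod_cast this
    calc a ^ (n + 2) / (n + 2).factorial ≤ a ^ (n + 2) / (2 * 3 ^ n) := by gcongr
      _ = a ^ 2 / 2 * (a / 3) ^ n := by rw [div_pow]; field_simp; ring
  calc exp a - 1 - a ≤ ∑' n : ℕ, a ^ 2 / 2 * (a / 3) ^ n := by
        rw [htail]
        exact Summable.tsum_le_tsum hterm ((summable_nat_add_iff 2).2 hs)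
          ((summable_geometric_of_lt_one hq0 hq1).mul_left _)
    _ = a ^ 2 / (2 * (1 - a / 3)) := by
        rw [tsum_mul_left, tsum_geometric_of_lt_one hq0 hq1]; field_simp

theorem exp_sub_one_sub_le_sq_div {a r : ℝ} (hr0 : 0 ≤ r) (hr1 : r < 1) (ha : a ≤ 3 * r) :
    exp a - 1 - a ≤ a ^ 2 / (2 * (1 - r)) := by
  rcases le_or_gt a 0 with hneg | hpos
  · calc exp a - 1 - a ≤ a ^ 2 / 2 := by
          linarith [exp_le_one_add_add_sq_div_two_of_nonpos hneg]
      _ ≤ a ^ 2 / (2 * (1 - r)) := by gcongr; linarith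
  · calc exp a - 1 - a ≤ a ^ 2 / (2 * (1 - a / 3)) :=
          exp_sub_one_sub_le_of_nonneg_of_lt_three hpos.le (by linarith)
      _ ≤ a ^ 2 / (2 * (1 - r)) := by gcongr; linarith

theorem exp_neg_sq_div_le_add {V M t : ℝ} (hV : 0 < V) (hM : 0 < M) (ht : 0 < t) :
    exp (-t ^ 2 / (2 * (V + M * t / 3))) ≤ exp (-t ^ 2 / (4 * V)) + exp (-(3 * t) / (4 * M)) := by
  rcases le_total (M * t / 3) V with h | h
  · refine (exp_le_exp.2 ?_).trans (le_add_of_nonneg_right (exp_nonneg _))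
    rw [neg_div, neg_div, neg_le_neg_iff]
    exact div_le_div_of_nonneg_left (by positivity) (by positivity) (by linarith)
  · refine (exp_le_exp.2 ?_).trans (le_add_of_nonneg_left (exp_nonneg _))
    rw [show -(3 * t) / (4 * M) = -t ^ 2 / (4 * (M * t / 3)) by field_simp,
      neg_div, neg_div, neg_le_neg_iff]
    exact div_le_div_of_nonneg_left (by positivity) (by positivity) (by linarith)

end Real

namespace ProbabilityTheory

variable {Ω : Type*} {m : MeasurableSpace Ω} {μ : Measure Ω}

theorem integral_nonneg_of_zero_or_one {B : Ω → ℝ} (hval : ∀ ω, B ω = 0 ∨ B ω = 1) :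
    0 ≤ μ[B] :=
  integral_nonneg fun ω => by rcases hval ω with h | h <;> simp [h]

theorem iIndepFun.mul_sub_integral {ι : Type*} {B : ι → Ω → ℝ} (c : ι → ℝ)
    (hindep : iIndepFun B μ) : iIndepFun (fun i ω => c i * (B i ω - μ[B i])) μ :=
  hindep.comp (fun i x => c i * (x - ∫ ω, B i ω ∂μ)) fun _ => by fun_prop

variable [IsProbabilityMeasure μ]

theorem mgf_sub_integral_le_of_zero_or_one {B : Ω → ℝ} (hB : Measurable B)
    (hval : ∀ ω, B ω = 0 ∨ B ω = 1) (a : ℝ) :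
    mgf (fun ω => B ω - μ[B]) μ a ≤ exp (μ[B] * (exp a - 1 - a)) := by
  set p := μ[B]
  have hint : Integrable B μ :=
    .of_mem_Icc 0 1 hB.aemeasurable (ae_of_all _ fun ω => by rcases hval ω with h | h <;> simp [h])
  have haffine (ω : Ω) :
      exp (a * (B ω - p)) = exp (-(a * p)) * (1 + (exp a - 1) * B ω) := by
    rcases hval ω with h | h <;> rw [h]
    · simp [← neg_mul]
    · rw [mul_one, add_sub_cancel, ← exp_add]; congr 1; ring
  calc mgf (fun ω => B ω - p) μ a = exp (-(a * p)) * (1 + (exp a - 1) * p) := by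
        rw [mgf, integral_congr_ae (ae_of_all _ haffine), integral_const_mul,
          integral_add (integrable_const 1) (hint.const_mul _), integral_const_mul]
        simp [p]
    _ ≤ exp (-(a * p)) * exp ((exp a - 1) * p) := by
        gcongr; linarith [add_one_le_exp ((exp a - 1) * p)]
    _ = exp (p * (exp a - 1 - a)) := by rw [← exp_add]; ring_nf

variable {ι : Type*} [Fintype ι] {B : ι → Ω → ℝ} (c : ι → ℝ)

theorem mgf_sum_mul_sub_integral_le (hmeas : ∀ i, Measurable (B i))
    (hval : ∀ i ω, B i ω = 0 ∨ B i ω = 1) (hindep : iIndepFun B μ)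
    {M l r : ℝ} (hc : ∀ i, |c i| ≤ M) (hl : 0 ≤ l) (hr0 : 0 ≤ r) (hr1 : r < 1)
    (hlM : l * M ≤ 3 * r) :
    mgf (∑ i, fun ω => c i * (B i ω - μ[B i])) μ l ≤
      exp (l ^ 2 / (2 * (1 - r)) * ∑ i, μ[B i] * c i ^ 2) := by
  have hterm (i : ι) : mgf (fun ω => c i * (B i ω - μ[B i])) μ l ≤
      exp (l ^ 2 / (2 * (1 - r)) * (μ[B i] * c i ^ 2)) := by
    rw [mgf_const_mul]
    refine (mgf_sub_integral_le_of_zero_or_one (hmeas i) (hval i) _).trans (exp_le_exp.2 ?_)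
    have hcl : c i * l ≤ 3 * r := by nlinarith [le_abs_self (c i), hc i]
    calc μ[B i] * (exp (c i * l) - 1 - c i * l)
        ≤ μ[B i] * ((c i * l) ^ 2 / (2 * (1 - r))) :=
          mul_le_mul_of_nonneg_left (exp_sub_one_sub_le_sq_div hr0 hr1 hcl)
            (integral_nonneg_of_zero_or_one (hval i))
      _ = l ^ 2 / (2 * (1 - r)) * (μ[B i] * c i ^ 2) := by ring
  rw [(hindep.mul_sub_integral c).mgf_sum (fun i => by fun_prop), mul_sum, exp_sum]
  exact prod_le_prod (fun i _ => mgf_nonneg) fun i _ => hterm i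

theorem measure_sum_mul_sub_integral_ge_le (hmeas : ∀ i, Measurable (B i))
    (hval : ∀ i ω, B i ω = 0 ∨ B i ω = 1) (hindep : iIndepFun B μ)
    {M V t : ℝ} (hM : 0 ≤ M) (hc : ∀ i, |c i| ≤ M) (hV : 0 < V)
    (hvar : ∑ i, μ[B i] * c i ^ 2 ≤ V) (ht : 0 < t) :
    μ {ω | t ≤ ∑ i, c i * (B i ω - μ[B i])} ≤
      ENNReal.ofReal (exp (-t ^ 2 / (2 * (V + M * t / 3)))) := by
  set D := V + M * t / 3
  have hD : 0 < D := by positivity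
  -- Bernstein's choice of the Chernoff parameter
  set l := t / D
  set r := M * l / 3
  have hl : 0 < l := div_pos ht hD
  have hr0 : 0 ≤ r := by positivity
  have hr : 1 - r = V / D := by
    rw [eq_div_iff hD.ne']; simp only [r, l, D]; field_simp; ring
  have hr1 : r < 1 := by have := div_pos hV hD; linarith
  have hint (i : ι) : Integrable (fun ω => exp (l * (c i * (B i ω - μ[B i])))) μ := by
    refine integrable_exp_mul_of_le l (|c i| + |c i * μ[B i]|) hl.le (by fun_prop)
      (ae_of_all _ fun ω => ?_)
    rcases hval i ω with h | h <;> rw [h]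
    · linarith [abs_nonneg (c i), neg_abs_le (c i * μ[B i])]
    · linarith [le_abs_self (c i), neg_abs_le (c i * μ[B i])]
  have hchernoff := measure_ge_le_exp_mul_mgf (μ := μ) t hl.le
    ((hindep.mul_sub_integral c).integrable_exp_mul_sum (fun i => by fun_prop) (s := univ)
      fun i _ => hint i)
  have hmgf := mgf_sum_mul_sub_integral_le c hmeas hval hindep hc hl.le hr0 hr1
    (by simp only [r]; linarith)
  simp only [Finset.sum_apply] at hchernoff
  rw [← ENNReal.ofReal_toReal (measure_ne_top μ _)]
  refine ENNReal.ofReal_le_ofReal (hchernoff.trans ?_)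
  calc exp (-l * t) * mgf (∑ i, fun ω => c i * (B i ω - μ[B i])) μ l
      ≤ exp (-l * t) * exp (l ^ 2 / (2 * (1 - r)) * V) := by
        gcongr
        refine hmgf.trans (exp_le_exp.2 ?_)
        gcongr
      _ = exp (-t ^ 2 / (2 * D)) := by
        rw [← exp_add, hr]; congr 1; simp only [l]; field_simp; ring

end ProbabilityTheory

section FoldLower

variable {α κ β : Type*} [LinearOrder α]

def foldLower [AddCommMonoid β] (F : α × α × κ → β) (q : α × α × κ) : β :=
  if q.1 = q.2.1 then F q else F q + F (q.2.1, q.1, q.2.2)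

theorem sum_eq_sum_foldLower [AddCommMonoid β] [Fintype α] [Fintype κ] (F : α × α × κ → β) :
    ∑ q, F q = ∑ q : {q : α × α × κ // q.1 ≤ q.2.1}, foldLower F q.1 := by
  have hlower : ∑ q ∈ univ.filter (fun q : α × α × κ => ¬ q.1 ≤ q.2.1), F q =
      ∑ q ∈ univ.filter (fun q : α × α × κ => q.1 ≤ q.2.1),
        if q.1 = q.2.1 then 0 else F (q.2.1, q.1, q.2.2) := by
    rw [sum_ite, sum_const_zero, zero_add, filter_filter]
    refine sum_nbij' (fun q => (q.2.1, q.1, q.2.2)) (fun q => (q.2.1, q.1, q.2.2)) ?_ ?_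
      (fun _ _ => rfl) (fun _ _ => rfl) (fun _ _ => rfl)
    · simp only [mem_filter, mem_univ, true_and, not_le]
      exact fun q h => ⟨h.le, h.ne⟩
    · simp only [mem_filter, mem_univ, true_and, not_le]
      exact fun q h => lt_of_le_of_ne h.1 h.2
  calc ∑ q, F q = ∑ q ∈ univ.filter (fun q : α × α × κ => q.1 ≤ q.2.1), F q +
        ∑ q ∈ univ.filter (fun q : α × α × κ => ¬ q.1 ≤ q.2.1), F q :=
        (sum_filter_add_sum_filter_not _ _ _).symm
    _ = ∑ q ∈ univ.filter (fun q : α × α × κ => q.1 ≤ q.2.1), foldLower F q := by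
        rw [hlower, ← sum_add_distrib]
        refine sum_congr rfl fun q _ => ?_
        unfold foldLower
        split_ifs <;> simp
    _ = ∑ q : {q : α × α × κ // q.1 ≤ q.2.1}, foldLower F q.1 :=
        sum_subtype _ (by simp) _

theorem foldLower_mul_of_symm [CommSemiring β] {g : α × α × κ → β}
    (hg : ∀ q, g (q.2.1, q.1, q.2.2) = g q) (x : α × α × κ → β) (q : α × α × κ) :
    foldLower (fun q => g q * x q) q = g q * foldLower x q := by
  unfold foldLower
  split_ifs <;> simp [hg, mul_add]

theorem abs_foldLower_le {x : α × α × κ → ℝ} {d : ℝ} (hx : ∀ q, |x q| ≤ d) (q : α × α × κ) :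
    |foldLower x q| ≤ 2 * d := by
  unfold foldLower
  split_ifs
  · linarith [hx q, abs_nonneg (x q)]
  · linarith [abs_add_le (x q) (x (q.2.1, q.1, q.2.2)), hx q, hx (q.2.1, q.1, q.2.2)]

theorem sq_foldLower_le (x : α × α × κ → ℝ) (q : α × α × κ) :
    foldLower x q ^ 2 ≤ foldLower (fun q => 2 * x q ^ 2) q := by
  unfold foldLower
  split_ifs
  · nlinarith [sq_nonneg (x q)]
  · nlinarith [sq_nonneg (x q - x (q.2.1, q.1, q.2.2))]

theorem sum_mul_sq_foldLower_le [Fintype α] [Fintype κ] {p : α × α × κ → ℝ} {P : ℝ}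
    (hp : ∀ q, p q ≤ P) (hP : 0 ≤ P) (x : α × α × κ → ℝ) :
    ∑ q : {q : α × α × κ // q.1 ≤ q.2.1}, p q.1 * foldLower x q.1 ^ 2 ≤
      2 * P * ∑ q, x q ^ 2 := by
  calc ∑ q : {q : α × α × κ // q.1 ≤ q.2.1}, p q.1 * foldLower x q.1 ^ 2
      ≤ P * ∑ q : {q : α × α × κ // q.1 ≤ q.2.1}, foldLower x q.1 ^ 2 := by
        rw [mul_sum]; gcongr with q; exact hp q.1
    _ ≤ P * ∑ q : {q : α × α × κ // q.1 ≤ q.2.1}, foldLower (fun q => 2 * x q ^ 2) q.1 := by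
        gcongr with q; exact sq_foldLower_le x q.1
    _ = 2 * P * ∑ q, x q ^ 2 := by rw [← sum_eq_sum_foldLower, ← mul_sum]; ring

theorem sum_sum_sum_mul_eq_sum_foldLower_mul [Fintype α] [Fintype κ] {Y : α → α → κ → ℝ}
    (hY : ∀ i j k, Y j i k = Y i j k) (x : α × α × κ → ℝ) :
    ∑ i, ∑ j, ∑ k, Y i j k * x (i, j, k) =
      ∑ q : {q : α × α × κ // q.1 ≤ q.2.1}, foldLower x q.1 * Y q.1.1 q.1.2.1 q.1.2.2 := by
  calc ∑ i, ∑ j, ∑ k, Y i j k * x (i, j, k) = ∑ q, Y q.1 q.2.1 q.2.2 * x q := by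
        simp only [Fintype.sum_prod_type]
    _ = _ := sum_eq_sum_foldLower _
    _ = _ := sum_congr rfl fun q _ => by
        rw [foldLower_mul_of_symm (g := fun q => Y q.1 q.2.1 q.2.2) (fun q => hY _ _ _), mul_comm]

end FoldLower

theorem abs_le_one_of_sum_sq_le_one {ι : Type*} [Fintype ι] {u : ι → ℝ}
    (h : ∑ i, u i ^ 2 ≤ 1) (i : ι) : |u i| ≤ 1 := by
  rw [← sq_le_one_iff_abs_le_one]
  exact (single_le_sum (fun j _ => sq_nonneg (u j)) (mem_univ i)).trans h

theorem abs_mul_mul_le {ι₁ ι₂ ι₃ : Type*} [Fintype ι₂] [Fintype ι₃]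
    {u₁ : ι₁ → ℝ} {u₂ : ι₂ → ℝ} {u₃ : ι₃ → ℝ} {δ : ℝ} (hu₁ : ∀ i, |u₁ i| ≤ δ)
    (hu₂ : ∑ j, u₂ j ^ 2 ≤ 1) (hu₃ : ∑ k, u₃ k ^ 2 ≤ 1) (i : ι₁) (j : ι₂) (k : ι₃) :
    |u₁ i * u₂ j * u₃ k| ≤ δ := by
  have hδ : 0 ≤ δ := (abs_nonneg _).trans (hu₁ i)
  calc |u₁ i * u₂ j * u₃ k| = |u₁ i| * |u₂ j| * |u₃ k| := by rw [abs_mul, abs_mul]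
    _ ≤ δ * 1 * 1 := by
        gcongr
        exacts [hu₁ i, abs_le_one_of_sum_sq_le_one hu₂ j, abs_le_one_of_sum_sq_le_one hu₃ k]
    _ = δ := by ring

theorem sum_sq_mul_mul_le_one {ι₁ ι₂ ι₃ : Type*} [Fintype ι₁] [Fintype ι₂] [Fintype ι₃]
    {u₁ : ι₁ → ℝ} {u₂ : ι₂ → ℝ} {u₃ : ι₃ → ℝ} (hu₁ : ∑ i, u₁ i ^ 2 ≤ 1)
    (hu₂ : ∑ j, u₂ j ^ 2 ≤ 1) (hu₃ : ∑ k, u₃ k ^ 2 ≤ 1) :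
    ∑ q : ι₁ × ι₂ × ι₃, (u₁ q.1 * u₂ q.2.1 * u₃ q.2.2) ^ 2 ≤ 1 := by
  calc ∑ q : ι₁ × ι₂ × ι₃, (u₁ q.1 * u₂ q.2.1 * u₃ q.2.2) ^ 2
      = (∑ i, u₁ i ^ 2) * (∑ j, u₂ j ^ 2) * ∑ k, u₃ k ^ 2 := by
        simp_rw [Fintype.sum_prod_type, mul_pow, ← mul_sum, ← sum_mul, sum_mul_sum]
    _ ≤ 1 := mul_le_one₀ (mul_le_one₀ hu₁ (sum_nonneg fun _ _ => sq_nonneg _) hu₂)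
        (sum_nonneg fun _ _ => sq_nonneg _) hu₃

/-- **Bernstein bound for a rank-one projection of the centered adjacency tensor**
(from the proof of Theorem 1/Theorem 5 of the paper): for deterministic unit vectors
`u₁, u₂, u₃` with `‖u₁‖_∞ ≤ δ`,
`P(⟨A − EA, u₁⊗u₂⊗u₃⟩ ≥ t) ≤ exp(−t²/(8 p_max)) + exp(−3t/(8δ))`. -/
theorem bernstein_rank_one_projection
    {Ω : Type*} [MeasureSpace Ω] [IsProbabilityMeasure (ℙ : Measure Ω)]
    (n L : ℕ)
    (A : Fin n → Fin n → Fin L → Ω → ℝ)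
    (hmeas : ∀ i₁ i₂ i₃, Measurable (A i₁ i₂ i₃))
    (hval : ∀ i₁ i₂ i₃ ω, A i₁ i₂ i₃ ω = 0 ∨ A i₁ i₂ i₃ ω = 1)
    (hsym : ∀ i₁ i₂ i₃, A i₂ i₁ i₃ = A i₁ i₂ i₃)
    (hindep : iIndepFun
      (fun q : {q : Fin n × Fin n × Fin L // q.1 ≤ q.2.1} =>
        A q.1.1 q.1.2.1 q.1.2.2) ℙ)
    (pmax : ℝ) (hpmax_pos : 0 < pmax)
    (hpmax : IsGreatest {x | ∃ i₁ i₂ i₃, x = ∫ ω, A i₁ i₂ i₃ ω} pmax)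
    (δ : ℝ) (hδ : δ ∈ Set.Ioc (0 : ℝ) 1)
    (u₁ u₂ : Fin n → ℝ) (u₃ : Fin L → ℝ)
    (hu₁ : ∑ i, (u₁ i) ^ 2 ≤ 1) (hu₂ : ∑ i, (u₂ i) ^ 2 ≤ 1)
    (hu₃ : ∑ i, (u₃ i) ^ 2 ≤ 1)
    (hinf : ∀ i, |u₁ i| ≤ δ) :
    ∀ t : ℝ, 0 < t →
      ℙ {ω | t ≤ ∑ i₁, ∑ i₂, ∑ i₃,
            (A i₁ i₂ i₃ ω - ∫ ω', A i₁ i₂ i₃ ω') * u₁ i₁ * u₂ i₂ * u₃ i₃}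
        ≤ ENNReal.ofReal
            (Real.exp (-t ^ 2 / (8 * pmax)) + Real.exp (-(3 * t) / (8 * δ))) := by
  intro t ht
  set x : Fin n × Fin n × Fin L → ℝ := fun q => u₁ q.1 * u₂ q.2.1 * u₃ q.2.2
  have hvar : ∑ q : {q : Fin n × Fin n × Fin L // q.1 ≤ q.2.1},
      (∫ ω, A q.1.1 q.1.2.1 q.1.2.2 ω) * foldLower x q.1 ^ 2 ≤ 2 * pmax := by
    have := sum_mul_sq_foldLower_le (p := fun q => ∫ ω, A q.1 q.2.1 q.2.2 ω)
      (fun q => hpmax.2 ⟨_, _, _, rfl⟩) hpmax_pos.le x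
    nlinarith [sum_sq_mul_mul_le_one hu₁ hu₂ hu₃]
  have hevent (ω : Ω) : ∑ i₁, ∑ i₂, ∑ i₃,
      (A i₁ i₂ i₃ ω - ∫ ω', A i₁ i₂ i₃ ω') * u₁ i₁ * u₂ i₂ * u₃ i₃ =
      ∑ q : {q : Fin n × Fin n × Fin L // q.1 ≤ q.2.1},
        foldLower x q.1 * (A q.1.1 q.1.2.1 q.1.2.2 ω - ∫ ω', A q.1.1 q.1.2.1 q.1.2.2 ω') := by
    calc _ = ∑ i₁, ∑ i₂, ∑ i₃, (A i₁ i₂ i₃ ω - ∫ ω', A i₁ i₂ i₃ ω') * x (i₁, i₂, i₃) := by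
          simp only [x, mul_assoc]
      _ = _ := sum_sum_sum_mul_eq_sum_foldLower_mul (fun i₁ i₂ i₃ => by simp only [hsym]) x
  have hbern := measure_sum_mul_sub_integral_ge_le (μ := ℙ)
    (B := fun q : {q : Fin n × Fin n × Fin L // q.1 ≤ q.2.1} => A q.1.1 q.1.2.1 q.1.2.2)
    (fun q => foldLower x q.1) (fun q => hmeas _ _ _) (fun q => hval _ _ _) hindep
    (by linarith [hδ.1])
    (fun q => abs_foldLower_le (fun q => abs_mul_mul_le hinf hu₂ hu₃ _ _ _) q.1) (by positivity)
    hvar ht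
  simp only [hevent]
  refine hbern.trans (ENNReal.ofReal_le_ofReal ?_)
  convert exp_neg_sq_div_le_add (V := 2 * pmax) (M := 2 * δ) (by positivity)
    (by linarith [hδ.1]) ht using 4 <;> ring
end

section
/- Let A be a random adjacency tensor of size n×n×L with L ≤ n and n ≥ 2: the entries {A(i₁,i₂,i₃) : 1 ≤ i₁ ≤ i₂ ≤ n, 1 ≤ i₃ ≤ L} are independent Bernoulli random variables, A(i₂,i₁,i₃) = A(i₁,i₂,i₃), and p_max = max E A(i₁,i₂,i₃) > 0. Then: (i) with probability at least 1 − n^{-2}, max_{i₂ ∈ [n], i₃ ∈ [L]} #{ i₁ ∈ [n] : A(i₁,i₂,i₃) = 1 } < 13 (n p_max + log n); and (ii) with probability at least 1 − n^{-2}, max_{i₃ ∈ [L]} #{ (i₁,i₂) ∈ [n]² : A(i₁,i₂,i₃) = 1 } < 13 (n² p_max + log n). (Bounds on the aspect ratios ν_{2,3} and ν₃ of the adjacency tensor.) -/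
/-!
Every fibre, and the upper-triangular half of every slice, is a sum of `K` independent Bernoulli
variables with means at most `p_max`. Since `exp x = 1 + (e - 1) x` on `{0, 1}`, Chernoff's bound
at `t = 1` bounds its upper tail at level `a` by `exp (-a + K (e - 1) p_max)`, which is at most
`n⁻⁴` once `a ≥ (e - 1) K p_max + 4 log n`. A union bound over the at most `n²` fibres (resp.
`L ≤ n` slices) leaves failure probability `n⁻²`. A full slice counts each off-diagonal entry
twice, hence its threshold is doubled; `e - 1 ≤ 13 / 2` makes `13` a valid constant in both cases.
-/

open MeasureTheory ProbabilityTheory Real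

section Tensor

variable {Ω α β γ : Type*} [MeasurableSpace Ω] {μ : Measure Ω} [LinearOrder α] [MeasurableSpace γ]
  {A : α → α → β → Ω → γ}

lemma iIndepFun_fiber (hsym : ∀ i j k, A j i k = A i j k)
    (hindep : iIndepFun (fun q : {q : α × α × β // q.1 ≤ q.2.1} => A q.1.1 q.1.2.1 q.1.2.2) μ)
    (j : α) (k : β) : iIndepFun (fun i => A i j k) μ := by
  have hinj : Function.Injective fun i : α =>
      (⟨(min i j, max i j, k), min_le_max⟩ : {q : α × α × β // q.1 ≤ q.2.1}) := by
    intro a b hab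
    simp only [Subtype.mk.injEq, Prod.mk.injEq] at hab
    grind
  have hsort : ∀ i, A (min i j) (max i j) k = A i j k := fun i => by
    rcases le_total i j with h | h
    · rw [min_eq_left h, max_eq_right h]
    · rw [min_eq_right h, max_eq_left h, hsym]
  simpa only [hsort] using hindep.precomp hinj

lemma iIndepFun_upper_slice
    (hindep : iIndepFun (fun q : {q : α × α × β // q.1 ≤ q.2.1} => A q.1.1 q.1.2.1 q.1.2.2) μ)
    (k : β) : iIndepFun (fun p : {p : α × α // p.1 ≤ p.2} => A p.1.1 p.1.2 k) μ :=
  hindep.precomp (g := fun p : {p : α × α // p.1 ≤ p.2} =>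
      (⟨(p.1.1, p.1.2, k), p.2⟩ : {q : α × α × β // q.1 ≤ q.2.1})) fun a b hab => by
    simp only [Subtype.mk.injEq, Prod.mk.injEq] at hab
    exact Subtype.ext (Prod.ext hab.1 hab.2.1)

end Tensor

lemma sum_le_two_nsmul_sum_upper {α M : Type*} [Fintype α] [LinearOrder α] [AddCommMonoid M]
    [PartialOrder M] [IsOrderedAddMonoid M] {f : α × α → M} (hf : ∀ p, 0 ≤ f p)
    (hsym : ∀ p : α × α, f p.swap = f p) :
    ∑ p, f p ≤ 2 • ∑ p : {p : α × α // p.1 ≤ p.2}, f p.1 := by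
  classical
  set g : α × α → M := fun p => if p.1 ≤ p.2 then f p else 0
  have hg : ∀ p, 0 ≤ g p := fun p => by
    simp only [g]; split_ifs; exacts [hf p, le_rfl]
  have hfg : ∀ p : α × α, f p ≤ g p + g p.swap := fun p => by
    rcases le_total p.1 p.2 with h | h
    · simpa [g, h] using le_add_of_nonneg_right (hg p.swap)
    · simpa [g, h, hsym] using le_add_of_nonneg_left (hg p)
  calc ∑ p, f p ≤ ∑ p, g p + ∑ p : α × α, g p.swap := by
        rw [← Finset.sum_add_distrib]; exact Finset.sum_le_sum fun p _ => hfg p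
    _ = 2 • ∑ p, g p := by
        rw [two_nsmul, Fintype.sum_equiv (Equiv.prodComm α α) (fun p => g p.swap) g fun _ => rfl]
    _ = 2 • ∑ p : {p : α × α // p.1 ≤ p.2}, f p.1 := by
        rw [← Finset.sum_filter, Finset.sum_subtype]; simp

lemma ncard_setOf_eq_one_eq_sum {κ R : Type*} [Fintype κ] [AddCommMonoidWithOne R]
    {f : κ → R} (hf : ∀ i, f i = 0 ∨ f i = 1) : ({i | f i = 1}.ncard : R) = ∑ i, f i := by
  classical
  calc ({i | f i = 1}.ncard : R) = ∑ i, if f i = 1 then 1 else 0 := by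
        rw [Finset.sum_boole, ← Set.ncard_coe_finset]; simp
    _ = ∑ i, f i := Finset.sum_congr rfl fun i _ => by
        split_ifs with h
        exacts [h.symm, ((hf i).resolve_right h).symm]

section Chernoff

variable {Ω : Type*} [MeasurableSpace Ω] {μ : Measure Ω}

lemma exp_eq_one_add_of_eq_zero_or_one {x : ℝ} (hx : x = 0 ∨ x = 1) :
    exp x = 1 + (exp 1 - 1) * x := by
  rcases hx with rfl | rfl <;> simp

lemma mgf_one_le_of_eq_zero_or_one [IsProbabilityMeasure μ] {X : Ω → ℝ} (hX : Measurable X)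
    (hval : ∀ ω, X ω = 0 ∨ X ω = 1) : mgf X μ 1 ≤ exp ((exp 1 - 1) * μ[X]) := by
  have hint : Integrable X μ := Integrable.of_bound hX.aestronglyMeasurable 1
    (ae_of_all _ fun ω => by rcases hval ω with h | h <;> simp [h])
  calc mgf X μ 1 = ∫ ω, 1 + (exp 1 - 1) * X ω ∂μ := by
        simp only [mgf, one_mul, exp_eq_one_add_of_eq_zero_or_one (hval _)]
    _ = 1 + (exp 1 - 1) * μ[X] := by
        rw [integral_add (integrable_const 1) (hint.const_mul _), integral_const_mul]; simp
    _ ≤ exp ((exp 1 - 1) * μ[X]) := by linarith [add_one_le_exp ((exp 1 - 1) * μ[X])]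

lemma measureReal_le_sum_le_exp_of_eq_zero_or_one {κ : Type*} [Fintype κ] {X : κ → Ω → ℝ}
    (hmeas : ∀ i, Measurable (X i)) (hval : ∀ i ω, X i ω = 0 ∨ X i ω = 1)
    (hindep : iIndepFun X μ) {p : ℝ} (hmean : ∀ i, μ[X i] ≤ p) (a : ℝ) :
    μ.real {ω | a ≤ ∑ i, X i ω} ≤ exp (-a + Fintype.card κ * ((exp 1 - 1) * p)) := by
  have := hindep.isProbabilityMeasure
  have hsum : Measurable fun ω => ∑ i, X i ω := Finset.measurable_sum _ fun i _ => hmeas i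
  have hint : Integrable (fun ω => exp (1 * ∑ i, X i ω)) μ :=
    Integrable.of_bound (hsum.const_mul 1).exp.aestronglyMeasurable (exp (Fintype.card κ))
      (ae_of_all _ fun ω => by
        rw [norm_of_nonneg (exp_pos _).le, exp_le_exp, one_mul]
        calc ∑ i, X i ω ≤ ∑ _i : κ, (1 : ℝ) :=
              Finset.sum_le_sum fun i _ => by rcases hval i ω with h | h <;> simp [h]
          _ = Fintype.card κ := by simp)
  have he : 0 ≤ exp 1 - 1 := by linarith [add_one_le_exp (1 : ℝ)]
  calc μ.real {ω | a ≤ ∑ i, X i ω} ≤ exp (-1 * a) * mgf (fun ω => ∑ i, X i ω) μ 1 :=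
        measure_ge_le_exp_mul_mgf a zero_le_one hint
    _ = exp (-a) * ∏ i, mgf (X i) μ 1 := by
        rw [← hindep.mgf_sum hmeas, neg_one_mul]; congr 2; ext ω; simp
    _ ≤ exp (-a) * ∏ _i : κ, exp ((exp 1 - 1) * p) := by
        gcongr with i
        · exact fun i _ => mgf_nonneg
        · exact (mgf_one_le_of_eq_zero_or_one (hmeas i) (hval i)).trans
            (exp_le_exp.2 (mul_le_mul_of_nonneg_left (hmean i) he))
    _ = exp (-a + Fintype.card κ * ((exp 1 - 1) * p)) := by
        rw [Finset.prod_const, ← exp_nat_mul, ← exp_add, Finset.card_univ]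

lemma ofReal_one_sub_le_measure_forall_sum_lt [IsProbabilityMeasure μ] {ι κ : Type*} [Fintype ι]
    [Fintype κ] {X : ι → κ → Ω → ℝ} (hmeas : ∀ j i, Measurable (X j i))
    (hval : ∀ j i ω, X j i ω = 0 ∨ X j i ω = 1) (hindep : ∀ j, iIndepFun (X j) μ) {p : ℝ}
    (hmean : ∀ j i, μ[X j i] ≤ p) (a : ℝ) :
    ENNReal.ofReal (1 - Fintype.card ι * exp (-a + Fintype.card κ * ((exp 1 - 1) * p))) ≤
      μ {ω | ∀ j, ∑ i, X j i ω < a} := by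
  set B : ι → Set Ω := fun j => {ω | a ≤ ∑ i, X j i ω}
  have hB : MeasurableSet (⋃ j, B j) := MeasurableSet.iUnion fun j =>
    measurableSet_le measurable_const (Finset.measurable_sum _ fun i _ => hmeas j i)
  have hset : {ω | ∀ j, ∑ i, X j i ω < a} = (⋃ j, B j)ᶜ := by ext; simp [B]
  rw [hset, ← ofReal_measureReal, probReal_compl_eq_one_sub hB]
  refine ENNReal.ofReal_le_ofReal (sub_le_sub_left ?_ 1)
  calc μ.real (⋃ j, B j) ≤ ∑ j, μ.real (B j) := measureReal_iUnion_fintype_le B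
    _ ≤ ∑ _j : ι, exp (-a + Fintype.card κ * ((exp 1 - 1) * p)) := Finset.sum_le_sum fun j _ =>
        measureReal_le_sum_le_exp_of_eq_zero_or_one (hmeas j) (hval j) (hindep j) (hmean j) a
    _ = Fintype.card ι * exp (-a + Fintype.card κ * ((exp 1 - 1) * p)) := by simp

end Chernoff

lemma natCast_mul_exp_le_one_div_sq {n N : ℕ} (hn : 0 < n) (hN : N ≤ n ^ 2) {E : ℝ}
    (hE : E ≤ -4 * log n) : N * exp E ≤ 1 / (n : ℝ) ^ 2 := by
  have hn' : (0 : ℝ) < n := by exact_mod_cast hn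
  calc (N : ℝ) * exp E ≤ (n : ℝ) ^ 2 * exp (log n * (-4 : ℤ)) := by
        gcongr
        · exact_mod_cast hN
        · push_cast; linarith
    _ = 1 / (n : ℝ) ^ 2 := by
        rw [← rpow_def_of_pos hn', rpow_intCast]; field_simp

section AdjacencyTensor

variable {Ω : Type*} [MeasurableSpace Ω] {μ : Measure Ω} [IsProbabilityMeasure μ] {n L : ℕ}
  {A : Fin n → Fin n → Fin L → Ω → ℝ}

lemma ofReal_one_sub_inv_sq_le_measure_fibers_ncard_lt (hLn : L ≤ n) (hn : 0 < n)
    (hmeas : ∀ i₁ i₂ i₃, Measurable (A i₁ i₂ i₃))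
    (hval : ∀ i₁ i₂ i₃ ω, A i₁ i₂ i₃ ω = 0 ∨ A i₁ i₂ i₃ ω = 1)
    (hsym : ∀ i₁ i₂ i₃, A i₂ i₁ i₃ = A i₁ i₂ i₃)
    (hindep : iIndepFun (fun q : {q : Fin n × Fin n × Fin L // q.1 ≤ q.2.1} =>
      A q.1.1 q.1.2.1 q.1.2.2) μ)
    {p : ℝ} (hmean : ∀ i₁ i₂ i₃, μ[A i₁ i₂ i₃] ≤ p) {a : ℝ}
    (ha : (exp 1 - 1) * n * p + 4 * log n ≤ a) :
    ENNReal.ofReal (1 - 1 / (n : ℝ) ^ 2) ≤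
      μ {ω | ∀ i₂ i₃, ({i₁ | A i₁ i₂ i₃ ω = 1}.ncard : ℝ) < a} := by
  have hunion := ofReal_one_sub_le_measure_forall_sum_lt
    (X := fun (q : Fin n × Fin L) i₁ => A i₁ q.1 q.2) (fun q i₁ => hmeas i₁ q.1 q.2)
    (fun q i₁ => hval i₁ q.1 q.2) (fun q => iIndepFun_fiber hsym hindep q.1 q.2)
    (fun q i₁ => hmean i₁ q.1 q.2) a
  have hcard : Fintype.card (Fin n × Fin L) ≤ n ^ 2 := by
    simpa [sq] using Nat.mul_le_mul_left n hLn
  have hexp : -a + Fintype.card (Fin n) * ((exp 1 - 1) * p) ≤ -4 * log n := by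
    simp only [Fintype.card_fin]; linarith
  refine (ENNReal.ofReal_le_ofReal (sub_le_sub_left ?_ 1)).trans
    (hunion.trans (measure_mono fun ω h i₂ i₃ => ?_))
  · exact natCast_mul_exp_le_one_div_sq hn hcard hexp
  · rw [ncard_setOf_eq_one_eq_sum (hval · i₂ i₃ ω)]
    exact h (i₂, i₃)

lemma ofReal_one_sub_inv_sq_le_measure_slices_ncard_lt (hLn : L ≤ n) (hn : 0 < n)
    (hmeas : ∀ i₁ i₂ i₃, Measurable (A i₁ i₂ i₃))
    (hval : ∀ i₁ i₂ i₃ ω, A i₁ i₂ i₃ ω = 0 ∨ A i₁ i₂ i₃ ω = 1)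
    (hsym : ∀ i₁ i₂ i₃, A i₂ i₁ i₃ = A i₁ i₂ i₃)
    (hindep : iIndepFun (fun q : {q : Fin n × Fin n × Fin L // q.1 ≤ q.2.1} =>
      A q.1.1 q.1.2.1 q.1.2.2) μ)
    {p : ℝ} (hp : 0 ≤ p) (hmean : ∀ i₁ i₂ i₃, μ[A i₁ i₂ i₃] ≤ p) {a : ℝ}
    (ha : 2 * ((exp 1 - 1) * n ^ 2 * p + 4 * log n) ≤ a) :
    ENNReal.ofReal (1 - 1 / (n : ℝ) ^ 2) ≤
      μ {ω | ∀ i₃, ({q : Fin n × Fin n | A q.1 q.2 i₃ ω = 1}.ncard : ℝ) < a} := by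
  have hunion := ofReal_one_sub_le_measure_forall_sum_lt
    (X := fun i₃ (q : {q : Fin n × Fin n // q.1 ≤ q.2}) => A q.1.1 q.1.2 i₃)
    (fun i₃ q => hmeas q.1.1 q.1.2 i₃) (fun i₃ q => hval q.1.1 q.1.2 i₃)
    (iIndepFun_upper_slice hindep) (fun i₃ q => hmean q.1.1 q.1.2 i₃) (a / 2)
  have hcard : Fintype.card (Fin L) ≤ n ^ 2 := by
    simpa using hLn.trans (Nat.le_self_pow two_ne_zero n)
  have hcard_upper : (Fintype.card {q : Fin n × Fin n // q.1 ≤ q.2} : ℝ) ≤ n ^ 2 := by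
    exact_mod_cast (Fintype.card_subtype_le _).trans (by simp [sq])
  have he : 0 ≤ (exp 1 - 1) * p := mul_nonneg (by linarith [add_one_le_exp (1 : ℝ)]) hp
  have hexp : -(a / 2) + Fintype.card {q : Fin n × Fin n // q.1 ≤ q.2} * ((exp 1 - 1) * p) ≤
      -4 * log n := by
    nlinarith [mul_le_mul_of_nonneg_right hcard_upper he]
  refine (ENNReal.ofReal_le_ofReal (sub_le_sub_left ?_ 1)).trans
    (hunion.trans (measure_mono fun ω h i₃ => ?_))
  · exact natCast_mul_exp_le_one_div_sq hn hcard hexp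
  · have hsum := sum_le_two_nsmul_sum_upper (f := fun q : Fin n × Fin n => A q.1 q.2 i₃ ω)
      (fun q => by rcases hval q.1 q.2 i₃ ω with h | h <;> simp [h])
      (fun q => congrFun (hsym q.1 q.2 i₃) ω)
    rw [ncard_setOf_eq_one_eq_sum (fun q : Fin n × Fin n => hval q.1 q.2 i₃ ω)]
    rw [nsmul_eq_mul, Nat.cast_ofNat] at hsum
    linarith [h i₃]

end AdjacencyTensor

/-- **Aspect-ratio (fiber and slice sparsity) bounds for the adjacency tensor**
(Chernoff bounds used in the proof of Theorem 5 of the paper): with probability at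
least `1 − n⁻²`, every mode-1 fiber has fewer than `13(n p_max + log n)` nonzero
entries, and with probability at least `1 − n⁻²`, every frontal slice has fewer than
`13(n² p_max + log n)` nonzero entries. -/
theorem aspect_ratio_bounds
    {Ω : Type*} [MeasureSpace Ω] [IsProbabilityMeasure (ℙ : Measure Ω)]
    (n L : ℕ) (hLn : L ≤ n) (hn : 2 ≤ n)
    (A : Fin n → Fin n → Fin L → Ω → ℝ)
    (hmeas : ∀ i₁ i₂ i₃, Measurable (A i₁ i₂ i₃))
    (hval : ∀ i₁ i₂ i₃ ω, A i₁ i₂ i₃ ω = 0 ∨ A i₁ i₂ i₃ ω = 1)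
    (hsym : ∀ i₁ i₂ i₃, A i₂ i₁ i₃ = A i₁ i₂ i₃)
    (hindep : iIndepFun
      (fun q : {q : Fin n × Fin n × Fin L // q.1 ≤ q.2.1} =>
        A q.1.1 q.1.2.1 q.1.2.2) ℙ)
    (pmax : ℝ) (hpmax_pos : 0 < pmax)
    (hpmax : IsGreatest {x | ∃ i₁ i₂ i₃, x = ∫ ω, A i₁ i₂ i₃ ω} pmax) :
    ENNReal.ofReal (1 - 1 / (n : ℝ) ^ 2) ≤
      ℙ {ω | ∀ (i₂ : Fin n) (i₃ : Fin L),
          (({i₁ : Fin n | A i₁ i₂ i₃ ω = 1}.ncard : ℝ)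
            < 13 * (n * pmax + Real.log n))} ∧
    ENNReal.ofReal (1 - 1 / (n : ℝ) ^ 2) ≤
      ℙ {ω | ∀ i₃ : Fin L,
          (({p : Fin n × Fin n | A p.1 p.2 i₃ ω = 1}.ncard : ℝ)
            < 13 * ((n : ℝ) ^ 2 * pmax + Real.log n))} := by
  have hmean : ∀ i₁ i₂ i₃, ∫ ω, A i₁ i₂ i₃ ω ≤ pmax := fun i₁ i₂ i₃ => hpmax.2 ⟨i₁, i₂, i₃, rfl⟩
  have hlog : 0 ≤ log n := log_nonneg (by exact_mod_cast hn.trans' one_le_two)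
  have he : exp 1 - 1 ≤ 13 / 2 := by linarith [exp_one_lt_d9]
  have hnp : 0 ≤ (n : ℝ) * pmax := by positivity
  have hn2p : 0 ≤ (n : ℝ) ^ 2 * pmax := by positivity
  exact ⟨ofReal_one_sub_inv_sq_le_measure_fibers_ncard_lt hLn (by omega) hmeas hval hsym hindep
      hmean (by nlinarith),
    ofReal_one_sub_inv_sq_le_measure_slices_ncard_lt hLn (by omega) hmeas hval hsym hindep
      hpmax_pos.le hmean (by nlinarith)⟩
end

section
/- (Deterministic K-means misclustering bound underlying Theorem 3.) Let r, K ≥ 1, α, R > 0, let u₁,…,u_n ∈ ℝ^r, let v₁,…,v_K ∈ ℝ^r satisfy ‖v_k − v_{k'}‖ ≥ 3α√r for all k ≠ k', and let τ : {1,…,n} → {1,…,K}. Define J = { i : ‖u_i − v_{τ(i)}‖ ≤ α√r/3 }. Assume Σ_{i=1}^n ‖u_i − v_{τ(i)}‖² ≤ 2rR², and for every k, #(τ^{-1}(k) ∩ J) · (2α√r/3)² > 2rR². Let (ĉ₁,…,ĉ_K) be any global minimizer over (ℝ^r)^K of the K-means objective F(c₁,…,c_K) = Σ_{i=1}^n min_{1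 ≤ k ≤ K} ‖u_i − c_k‖². Then: (a) the number of indices outside J satisfies #(Jᶜ) ≤ 18 R²/α²; (b) there is a bijection π : {1,…,K} → {1,…,K} such that ‖ĉ_{π(k)} − v_k‖ ≤ α√r for every k; (c) for every i ∈ J and every k ≠ π(τ(i)), ‖u_i − ĉ_{π(τ(i))}‖ < ‖u_i − ĉ_k‖, i.e., every point of J is strictly closest to the center matched to its true cluster. Consequently, if each point is assigned to a nearest optimal center, the number of points assigned inconsistently with τ (after relabeling by π) is at most 18 R²/α². -/
/-- **Deterministic K-means misclustering bound** (underlying Theorem 3 of the paper).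
If the true centers `v` are `3α√r`-separated, the total squared deviation of the
points from their true centers is at most `2rR²`, and every true cluster has enough
well-approximated points, then any global minimizer of the K-means objective has
centers matching the true ones, points of `J` are assigned correctly, and at most
`18R²/α²` points are misclustered. -/
theorem kmeans_misclustering_bound
    (n K r : ℕ) (hr : 1 ≤ r) (hK : 1 ≤ K)
    (α R : ℝ) (hα : 0 < α) (hR : 0 < R)
    (u : Fin n → EuclideanSpace ℝ (Fin r))
    (v : Fin K → EuclideanSpace ℝ (Fin r))
    (hsep : ∀ k k' : Fin K, k ≠ k' → 3 * α * Real.sqrt r ≤ ‖v k - v k'‖)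
    (τ : Fin n → Fin K)
    (J : Set (Fin n))
    (hJ : J = {i | ‖u i - v (τ i)‖ ≤ α * Real.sqrt r / 3})
    (hsum : ∑ i, ‖u i - v (τ i)‖ ^ 2 ≤ 2 * r * R ^ 2)
    (hbig : ∀ k : Fin K, 2 * r * R ^ 2 <
      ({i | τ i = k ∧ i ∈ J}.ncard : ℝ) * (2 * α * Real.sqrt r / 3) ^ 2)
    (c : Fin K → EuclideanSpace ℝ (Fin r))
    (hopt : ∀ c' : Fin K → EuclideanSpace ℝ (Fin r),
      (∑ i, ⨅ k, ‖u i - c k‖ ^ 2) ≤ ∑ i, ⨅ k, ‖u i - c' k‖ ^ 2) :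
    ((Jᶜ : Set (Fin n)).ncard : ℝ) ≤ 18 * R ^ 2 / α ^ 2 ∧
    ∃ π : Equiv.Perm (Fin K),
      (∀ k, ‖c (π k) - v k‖ ≤ α * Real.sqrt r) ∧
      (∀ i ∈ J, ∀ k : Fin K, k ≠ π (τ i) →
        ‖u i - c (π (τ i))‖ < ‖u i - c k‖) ∧
      (∀ a : Fin n → Fin K,
        (∀ (i : Fin n) (k : Fin K), ‖u i - c (a i)‖ ≤ ‖u i - c k‖) →
        ({i | a i ≠ π (τ i)}.ncard : ℝ) ≤ 18 * R ^ 2 / α ^ 2) := by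
  classical
  haveI : NeZero K := ⟨Nat.one_le_iff_ne_zero.mp hK⟩
  haveI hKne : Nonempty (Fin K) := Fin.pos_iff_nonempty.mp hK
  set s : ℝ := α * Real.sqrt r with hs_def
  have hrpos : (0:ℝ) < r := by
    have : (1:ℝ) ≤ r := by exact_mod_cast hr
    linarith
  have hsqrt : (0:ℝ) < Real.sqrt r := Real.sqrt_pos.mpr hrpos
  have hsq : Real.sqrt r ^ 2 = (r:ℝ) := Real.sq_sqrt hrpos.le
  have hs : 0 < s := mul_pos hα hsqrt
  have hs2 : s ^ 2 = α ^ 2 * r := by rw [hs_def, mul_pow, hsq]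
  -- bounded below for infima
  have hbdd : ∀ (i : Fin n) (c' : Fin K → EuclideanSpace ℝ (Fin r)),
      BddBelow (Set.range fun k => ‖u i - c' k‖ ^ 2) := by
    intro i c'
    exact ⟨0, by rintro x ⟨k, rfl⟩; exact sq_nonneg _⟩
  -- Part (a)
  have parta : ((Jᶜ : Set (Fin n)).ncard : ℝ) ≤ 18 * R ^ 2 / α ^ 2 := by
    have key : ((Jᶜ : Set (Fin n)).ncard : ℝ) * (s / 3) ^ 2 ≤ 2 * r * R ^ 2 := by
      have h1 : ((Jᶜ : Set (Fin n)).ncard : ℝ) * (s / 3) ^ 2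
          = ∑ i ∈ (Jᶜ : Set (Fin n)).toFinset, (s / 3) ^ 2 := by
        rw [Finset.sum_const, Set.ncard_eq_toFinset_card', nsmul_eq_mul]
      rw [h1]
      have h2 : ∑ i ∈ (Jᶜ : Set (Fin n)).toFinset, (s / 3) ^ 2
          ≤ ∑ i ∈ (Jᶜ : Set (Fin n)).toFinset, ‖u i - v (τ i)‖ ^ 2 := by
        apply Finset.sum_le_sum
        intro i hi
        rw [Set.mem_toFinset, Set.mem_compl_iff, hJ, Set.mem_setOf_eq, not_le] at hi
        exact pow_le_pow_left₀ (by positivity) hi.le 2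
      refine le_trans h2 (le_trans ?_ hsum)
      exact Finset.sum_le_sum_of_subset_of_nonneg (Finset.subset_univ _)
        (fun i _ _ => sq_nonneg _)
    rw [le_div_iff₀ (show (0:ℝ) < α ^ 2 by positivity)]
    nlinarith [key, hs2, (Nat.cast_nonneg ((Jᶜ : Set (Fin n)).ncard) : (0:ℝ) ≤ ((Jᶜ : Set (Fin n)).ncard : ℝ))]
  refine ⟨parta, ?_⟩
  -- F(c) ≤ 2rR²
  have hFc : (∑ i, ⨅ k, ‖u i - c k‖ ^ 2) ≤ 2 * r * R ^ 2 := by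
    refine le_trans (hopt v) (le_trans ?_ hsum)
    exact Finset.sum_le_sum fun i _ => ciInf_le (hbdd i v) (τ i)
  -- each true center has a nearby optimal center
  have hex : ∀ k : Fin K, ∃ j, ‖c j - v k‖ ≤ s := by
    intro k
    by_contra h
    push_neg at h
    have hlow : ∀ i : Fin n, i ∈ ({i | τ i = k ∧ i ∈ J} : Set (Fin n)).toFinset →
        (2 * s / 3) ^ 2 ≤ ⨅ j, ‖u i - c j‖ ^ 2 := by
      intro i hi
      rw [Set.mem_toFinset, Set.mem_setOf_eq] at hi
      obtain ⟨hik, hiJ⟩ := hi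
      refine le_ciInf fun j => ?_
      have h1 : ‖u i - v k‖ ≤ s / 3 := by
        rw [hJ, Set.mem_setOf_eq] at hiJ; rw [← hik]; exact hiJ
      have h2 : s < ‖c j - v k‖ := h j
      have tri : ‖c j - v k‖ ≤ ‖c j - u i‖ + ‖u i - v k‖ := by
        have := norm_add_le (c j - u i) (u i - v k)
        rwa [sub_add_sub_cancel] at this
      have h3 : 2 * s / 3 ≤ ‖u i - c j‖ := by
        rw [norm_sub_rev]; linarith
      exact pow_le_pow_left₀ (by positivity) h3 2
    have hsum2 : (({i | τ i = k ∧ i ∈ J} : Set (Fin n)).ncard : ℝ) * (2 * s / 3) ^ 2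
        ≤ ∑ i, ⨅ j, ‖u i - c j‖ ^ 2 := by
      have e1 : (({i | τ i = k ∧ i ∈ J} : Set (Fin n)).ncard : ℝ) * (2 * s / 3) ^ 2
          = ∑ i ∈ ({i | τ i = k ∧ i ∈ J} : Set (Fin n)).toFinset, (2 * s / 3) ^ 2 := by
        rw [Finset.sum_const, Set.ncard_eq_toFinset_card', nsmul_eq_mul]
      rw [e1]
      refine le_trans (Finset.sum_le_sum hlow) ?_
      refine Finset.sum_le_sum_of_subset_of_nonneg (Finset.subset_univ _) ?_
      intro i _ _
      exact le_ciInf fun j => sq_nonneg _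
    have := hbig k
    have hss : (2 * α * Real.sqrt r / 3) ^ 2 = (2 * s / 3) ^ 2 := by
      rw [hs_def]; ring
    rw [hss] at this
    linarith [le_trans hsum2 hFc]
  choose g hg using hex
  have ginj : Function.Injective g := by
    intro k k' hkk'
    by_contra hne
    have hsep' : 3 * s ≤ ‖v k - v k'‖ := by
      rw [hs_def, ← mul_assoc]; exact hsep k k' hne
    have t1 := hg k
    have t2 := hg k'
    rw [hkk'] at t1
    have tri : ‖v k - v k'‖ ≤ ‖c (g k') - v k‖ + ‖c (g k') - v k'‖ := by
      have := norm_add_le (v k - c (g k')) (c (g k') - v k')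
      rw [sub_add_sub_cancel, norm_sub_rev (v k) (c (g k'))] at this
      exact this
    linarith
  let π : Equiv.Perm (Fin K) := Equiv.ofBijective g (Finite.injective_iff_bijective.mp ginj)
  have hπ : ∀ k, π k = g k := fun k => rfl
  refine ⟨π, ?_, ?_, ?_⟩
  · intro k; rw [hπ]; exact hg k
  · -- part (c)
    intro i hiJ k hk
    have h1 : ‖u i - v (τ i)‖ ≤ s / 3 := by
      rw [hJ, Set.mem_setOf_eq] at hiJ; exact hiJ
    have h2 : ‖c (g (τ i)) - v (τ i)‖ ≤ s := hg (τ i)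
    have hub : ‖u i - c (π (τ i))‖ ≤ 4 * s / 3 := by
      rw [hπ]
      have tri : ‖u i - c (g (τ i))‖ ≤ ‖u i - v (τ i)‖ + ‖v (τ i) - c (g (τ i))‖ := by
        have := norm_add_le (u i - v (τ i)) (v (τ i) - c (g (τ i)))
        rwa [sub_add_sub_cancel] at this
      rw [norm_sub_rev (v (τ i))] at tri
      linarith
    set k' : Fin K := π.symm k with hk'
    have hck : c k = c (g k') := by rw [hk', ← hπ, π.apply_symm_apply]
    have hk'ne : k' ≠ τ i := by
      intro hcon
      apply hk
      rw [← π.apply_symm_apply k, ← hk', hcon]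
    have hsep' : 3 * s ≤ ‖v k' - v (τ i)‖ := by
      rw [hs_def, ← mul_assoc]; exact hsep k' (τ i) hk'ne
    have h3 : ‖c (g k') - v k'‖ ≤ s := hg k'
    have tri2 : ‖v k' - v (τ i)‖ ≤ ‖v k' - c (g k')‖ + ‖c (g k') - u i‖ + ‖u i - v (τ i)‖ := by
      have t1 := norm_add_le (v k' - c (g k')) (c (g k') - u i)
      rw [sub_add_sub_cancel] at t1
      have t2 := norm_add_le (v k' - u i) (u i - v (τ i))
      rw [sub_add_sub_cancel] at t2
      linarith
    have e1 : ‖v k' - c (g k')‖ = ‖c (g k') - v k'‖ := norm_sub_rev _ _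
    have e2 : ‖c (g k') - u i‖ = ‖u i - c (g k')‖ := norm_sub_rev _ _
    have hlb : 5 * s / 3 ≤ ‖u i - c k‖ := by rw [hck]; linarith
    linarith
  · -- part (d)
    intro a ha
    have hsub : ({i | a i ≠ π (τ i)} : Set (Fin n)) ⊆ (Jᶜ : Set (Fin n)) := by
      intro i hi
      simp only [Set.mem_setOf_eq] at hi
      intro hiJ
      apply hi
      by_contra hne
      -- from part c reasoning: strict inequality contradicts optimality of a
      have h1 : ‖u i - v (τ i)‖ ≤ s / 3 := by
        rw [hJ, Set.mem_setOf_eq] at hiJ; exact hiJ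
      -- reuse the strict comparison
      have hstrict : ‖u i - c (π (τ i))‖ < ‖u i - c (a i)‖ := by
        have h2 : ‖c (g (τ i)) - v (τ i)‖ ≤ s := hg (τ i)
        have hub : ‖u i - c (π (τ i))‖ ≤ 4 * s / 3 := by
          rw [hπ]
          have tri : ‖u i - c (g (τ i))‖ ≤ ‖u i - v (τ i)‖ + ‖v (τ i) - c (g (τ i))‖ := by
            have := norm_add_le (u i - v (τ i)) (v (τ i) - c (g (τ i)))
            rwa [sub_add_sub_cancel] at this
          rw [norm_sub_rev (v (τ i))] at tri
          linarith
        set k' : Fin K := π.symm (a i) with hk'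
        have hck : c (a i) = c (g k') := by rw [hk', ← hπ, π.apply_symm_apply]
        have hk'ne : k' ≠ τ i := by
          intro hcon
          apply hne
          rw [← π.apply_symm_apply (a i), ← hk', hcon]
        have hsep' : 3 * s ≤ ‖v k' - v (τ i)‖ := by
          rw [hs_def, ← mul_assoc]; exact hsep k' (τ i) hk'ne
        have h3 : ‖c (g k') - v k'‖ ≤ s := hg k'
        have tri2 : ‖v k' - v (τ i)‖ ≤ ‖v k' - c (g k')‖ + ‖c (g k') - u i‖ + ‖u i - v (τ i)‖ := by
          have t1 := norm_add_le (v k' - c (g k')) (c (g k') - u i)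
          rw [sub_add_sub_cancel] at t1
          have t2 := norm_add_le (v k' - u i) (u i - v (τ i))
          rw [sub_add_sub_cancel] at t2
          linarith
        have e1 : ‖v k' - c (g k')‖ = ‖c (g k') - v k'‖ := norm_sub_rev _ _
        have e2 : ‖c (g k') - u i‖ = ‖u i - c (g k')‖ := norm_sub_rev _ _
        rw [hck]
        linarith
      exact absurd (ha i (π (τ i))) (not_le.mpr hstrict)
    have hcard : ({i | a i ≠ π (τ i)} : Set (Fin n)).ncard ≤ (Jᶜ : Set (Fin n)).ncard :=
      Set.ncard_le_ncard hsub (Set.toFinite _)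
    exact le_trans (by exact_mod_cast hcard) parta
end
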